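/- arXiv:2306.08800 — 4 statements merged into one kernel-verified Lean document; each statement's English description precedes it below -/
import Mathlib

section
/- Let (X,d) be a dissimilarity space and δ > 0 be such that the graph G_δ is not connected. Then every connected component of G_δ is an mmodule of (X,d). -/
structure Dissim (X : Type*) where
  d : X → X → ℝ
  symm : ∀ x y, d x y = d y x
  nonneg : ∀ x y, 0 ≤ d x y
  self : ∀ x, d x x = 0

variable {X : Type*}

def Compatible (D : Dissim X) (lt : X → X → Prop) : Prop :=
  ∀ x y z : X, lt x y → lt y z → D.d x y ≤ D.d x z ∧ D.d y z ≤ D.d x z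

def IsCompatOrder (D : Dissim X) (lt : X → X → Prop) : Prop :=
  IsStrictTotalOrder X lt ∧ Compatible D lt

def Robinson (D : Dissim X) : Prop :=
  ∃ lt : X → X → Prop, IsCompatOrder D lt

def IsMmodule (D : Dissim X) (M : Set X) : Prop :=
  ∀ z ∉ M, ∀ x ∈ M, ∀ y ∈ M, D.d z x = D.d z y

def IsInterval (lt : X → X → Prop) (I : Set X) : Prop :=
  ∀ a b c : X, lt a b → lt b c → a ∈ I → c ∈ I → b ∈ I

def IsBlock (D : Dissim X) (Y : Set X) : Prop :=
  ∀ lt : X → X → Prop, IsCompatOrder D lt → IsInterval lt Y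

noncomputable def diam (D : Dissim X) (Y : Set X) : ℝ :=
  sSup (Set.image2 D.d Y Y)

def Gdelta (D : Dissim X) (δ : ℝ) : SimpleGraph X where
  Adj x y := x ≠ y ∧ D.d x y ≠ δ
  symm := by
    constructor
    rintro x y ⟨hxy, hd⟩
    exact ⟨hxy.symm, by rw [D.symm]; exact hd⟩
  loopless := by constructor; rintro x ⟨h, -⟩; exact h rfl

def Gle (D : Dissim X) (δ : ℝ) : SimpleGraph X where
  Adj x y := x ≠ y ∧ D.d x y ≤ δ
  symm := by
    constructor
    rintro x y ⟨hxy, hd⟩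
    exact ⟨hxy.symm, by rw [D.symm]; exact hd⟩
  loopless := by constructor; rintro x ⟨h, -⟩; exact h rfl

def Glt (D : Dissim X) (δ : ℝ) : SimpleGraph X where
  Adj x y := x ≠ y ∧ D.d x y < δ
  symm := by
    constructor
    rintro x y ⟨hxy, hd⟩
    exact ⟨hxy.symm, by rw [D.symm]; exact hd⟩
  loopless := by constructor; rintro x ⟨h, -⟩; exact h rfl

def IsCompOf {V : Type*} (G : SimpleGraph V) (C : Set V) : Prop :=
  ∃ x : V, C = {y | G.Reachable x y}

def MMax (D : Dissim X) : Set (Set X) :=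
  {M | IsMmodule D M ∧ M ≠ Set.univ ∧
    ∀ M' : Set X, IsMmodule D M' → M' ≠ Set.univ → M ⊆ M' → M = M'}

def IsPartition {α : Type*} (P : Set (Set α)) : Prop :=
  (∀ A ∈ P, A.Nonempty) ∧
  (∀ A ∈ P, ∀ B ∈ P, A ≠ B → Disjoint A B) ∧
  ⋃₀ P = Set.univ

def IsCopartition {α : Type*} (P : Set (Set α)) : Prop :=
  IsPartition ((fun M => Mᶜ) '' P)

def SimpleGraph.restrictTo {V : Type*} (G : SimpleGraph V) (S : Set V) : SimpleGraph V where
  Adj x y := x ∈ S ∧ y ∈ S ∧ G.Adj x y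
  symm := by constructor; rintro x y ⟨hx, hy, h⟩; exact ⟨hy, hx, h.symm⟩
  loopless := by constructor; rintro x ⟨-, -, h⟩; exact G.irrefl h

def ConnectedWithin {V : Type*} (G : SimpleGraph V) (S : Set V) : Prop :=
  S.Nonempty ∧ ∀ x ∈ S, ∀ y ∈ S, (G.restrictTo S).Reachable x y

def IsCompWithin {V : Type*} (G : SimpleGraph V) (S : Set V) (C : Set V) : Prop :=
  ∃ x ∈ S, C = {y | (G.restrictTo S).Reachable x y}

def IsStrictTotalOrderOn {α : Type*} (S : Set α) (lt : α → α → Prop) : Prop :=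
  (∀ x ∈ S, ¬ lt x x) ∧
  (∀ x ∈ S, ∀ y ∈ S, ∀ z ∈ S, lt x y → lt y z → lt x z) ∧
  (∀ x ∈ S, ∀ y ∈ S, x ≠ y → (lt x y ∨ lt y x) ∧ ¬ (lt x y ∧ lt y x))

def CompatibleOn (D : Dissim X) (S : Set X) (lt : X → X → Prop) : Prop :=
  ∀ x ∈ S, ∀ y ∈ S, ∀ z ∈ S, lt x y → lt y z → D.d x y ≤ D.d x z ∧ D.d y z ≤ D.d x z

def IsCompatOrderOn (D : Dissim X) (S : Set X) (lt : X → X → Prop) : Prop :=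
  IsStrictTotalOrderOn S lt ∧ CompatibleOn D S lt

def FlatOn (D : Dissim X) (S : Set X) : Prop :=
  ∃ lt : X → X → Prop, IsCompatOrderOn D S lt ∧ (∃ x ∈ S, ∃ y ∈ S, lt x y) ∧
    ∀ lt' : X → X → Prop, IsCompatOrderOn D S lt' →
      (∀ x ∈ S, ∀ y ∈ S, (lt' x y ↔ lt x y)) ∨ (∀ x ∈ S, ∀ y ∈ S, (lt' x y ↔ lt y x))

def Flat (D : Dissim X) : Prop :=
  ∃ lt : X → X → Prop, IsCompatOrder D lt ∧ (∃ x y : X, lt x y) ∧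
    ∀ lt' : X → X → Prop, IsCompatOrder D lt' →
      (∀ x y : X, lt' x y ↔ lt x y) ∨ (∀ x y : X, lt' x y ↔ lt y x)

def IsCopointAt (D : Dissim X) (p : X) (C : Set X) : Prop :=
  IsMmodule D C ∧ C.Nonempty ∧ p ∉ C ∧
  ∀ C' : Set X, IsMmodule D C' → p ∉ C' → C ⊆ C' → C = C'

def bigGraph (D : Dissim X) (δ : ℝ) (I : Set (Set X)) : SimpleGraph (Set X) where
  Adj C C' := C ∈ I ∧ C' ∈ I ∧ C ≠ C' ∧ ∃ x ∈ C, ∃ y ∈ C', δ < D.d x y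
  symm := by
    constructor
    rintro C C' ⟨hC, hC', hne, x, hx, y, hy, hd⟩
    exact ⟨hC', hC, hne.symm, y, hy, x, hx, by rw [D.symm]; exact hd⟩
  loopless := by constructor; rintro C ⟨-, -, hne, -⟩; exact hne rfl

theorem Gdelta_dist_eq_of_not_reachable {D : Dissim X} {δ : ℝ} {w z : X}
    (h : ¬ (Gdelta D δ).Reachable w z) : D.d z w = δ := by
  by_contra hne
  have hwz : w ≠ z := by rintro rfl; exact h .rfl
  exact h (SimpleGraph.Adj.reachable ⟨hwz, by rwa [D.symm]⟩)

theorem stmt3_general (D : Dissim X)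
    (δ : ℝ)
    (C : Set X) (hC : IsCompOf (Gdelta D δ) C) :
    IsMmodule D C := by
  obtain ⟨x₀, rfl⟩ := hC
  intro z hz x hx y hy
  have hxz : ¬ (Gdelta D δ).Reachable x z := fun h => hz (hx.trans h)
  have hyz : ¬ (Gdelta D δ).Reachable y z := fun h => hz (hy.trans h)
  rw [Gdelta_dist_eq_of_not_reachable hxz, Gdelta_dist_eq_of_not_reachable hyz]

/-- if G_δ is not connected, each of its connected components is an
mmodule. -/
theorem stmt3 [Fintype X] [Nonempty X] (D : Dissim X)
    (δ : ℝ) (hδ : 0 < δ)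
    (hnc : ¬ (Gdelta D δ).Connected)
    (C : Set X) (hC : IsCompOf (Gdelta D δ) C) :
    IsMmodule D C :=
  stmt3_general D δ C hC
end

section
/- Let (X,d) be a dissimilarity space and suppose there exists δ > 0 such that the graph G_δ is not connected. Then M_max = {X ∖ C : C is a connected component of G_δ}; in particular M_max is a copartition of X. -/
variable {X : Type*}

/-!
Points in different components of `G_δ` are at dissimilarity exactly `δ`, so every union of
components is an mmodule. An mmodule `M` missing a point `z` cannot meet both the component of `z`
and its complement: otherwise some edge `u v` of `G_δ` inside that component has `u ∉ M`, `v ∈ M`,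
and for `y ∈ M` outside the component `d(u,v) = d(u,y) = δ`. Maximality then forces `M` to be the
complement of a component.
-/

open SimpleGraph

lemma SimpleGraph.Reachable.mem_of_forall_adj {V : Type*} {G : SimpleGraph V} {S : Set V}
    (hS : ∀ u v, u ∈ S → G.Adj u v → v ∈ S) {z w : V} (hz : z ∈ S) (h : G.Reachable z w) :
    w ∈ S := by
  obtain ⟨p⟩ := h
  induction p with
  | nil => exact hz
  | cons hadj _ ih => exact ih (hS _ _ hz hadj)

lemma exists_not_reachable_of_not_connected {V : Type*} {G : SimpleGraph V}
    (hnc : ¬ G.Connected) (x : V) : ∃ y, ¬ G.Reachable x y := by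
  rw [connected_iff_exists_forall_reachable, not_exists] at hnc
  exact not_forall.1 (hnc x)

lemma compl_reachable_ne_univ {V : Type*} (G : SimpleGraph V) (x : V) :
    {y | G.Reachable x y}ᶜ ≠ Set.univ :=
  (Set.ne_univ_iff_exists_notMem _).2 ⟨x, fun h => h (Reachable.refl x)⟩

namespace Dissim

variable {D : Dissim X} {δ : ℝ}

lemma d_eq_of_not_reachable_gdelta {x y : X} (h : ¬ (Gdelta D δ).Reachable x y) :
    D.d x y = δ := by
  by_contra hd
  rcases eq_or_ne x y with rfl | hne
  · exact h (Reachable.refl x)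
  · exact h (Adj.reachable ⟨hne, hd⟩)

lemma isMmodule_of_reachable_closed {S : Set X}
    (hS : ∀ a ∈ S, ∀ b, (Gdelta D δ).Reachable a b → b ∈ S) : IsMmodule D S := by
  intro z hz a ha b hb
  rw [D.symm z a, D.symm z b, d_eq_of_not_reachable_gdelta fun h => hz (hS a ha z h),
    d_eq_of_not_reachable_gdelta fun h => hz (hS b hb z h)]

lemma isMmodule_compl_reachable (x : X) : IsMmodule D {y | (Gdelta D δ).Reachable x y}ᶜ :=
  isMmodule_of_reachable_closed fun _ ha _ hab hb => ha (hb.trans hab.symm)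

lemma subset_reachable_or_subset_compl {M : Set X} (hM : IsMmodule D M) {z : X}
    (hz : z ∉ M) :
    M ⊆ {y | (Gdelta D δ).Reachable z y} ∨ M ⊆ {y | (Gdelta D δ).Reachable z y}ᶜ := by
  by_contra! h
  obtain ⟨y, hyM, hzy⟩ := Set.not_subset.1 h.1
  obtain ⟨w, hwM, hzw⟩ := Set.not_subset.1 h.2
  rw [Set.notMem_compl_iff] at hzw
  have hclosed : ∀ u v, u ∈ {u | (Gdelta D δ).Reachable z u ∧ u ∉ M} →
      (Gdelta D δ).Adj u v → v ∈ {u | (Gdelta D δ).Reachable z u ∧ u ∉ M} := by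
    rintro u v ⟨hzu, huM⟩ huv
    refine ⟨hzu.trans huv.reachable, fun hvM => huv.2 ?_⟩
    rw [hM u huM v hvM y hyM]
    exact d_eq_of_not_reachable_gdelta fun huy => hzy (hzu.trans huy)
  exact (hzw.mem_of_forall_adj hclosed ⟨Reachable.refl z, hz⟩).2 hwM

lemma compl_reachable_mem_mmax (hnc : ¬ (Gdelta D δ).Connected) (x : X) :
    {y | (Gdelta D δ).Reachable x y}ᶜ ∈ MMax D := by
  refine ⟨isMmodule_compl_reachable x, compl_reachable_ne_univ _ x, fun M hM hMu hsub => ?_⟩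
  obtain ⟨z, hz⟩ := (Set.ne_univ_iff_exists_notMem M).1 hMu
  have hxz : (Gdelta D δ).Reachable x z := by
    by_contra h
    exact hz (hsub h)
  rcases subset_reachable_or_subset_compl hM hz with h | h
  · obtain ⟨y, hxy⟩ := exists_not_reachable_of_not_connected hnc x
    exact absurd (hxz.trans (h (hsub hxy))) hxy
  · exact hsub.antisymm fun w hw hxw => h hw (hxz.symm.trans hxw)

lemma exists_eq_compl_reachable_of_mem_mmax (hnc : ¬ (Gdelta D δ).Connected) {M : Set X}
    (hM : M ∈ MMax D) : ∃ x, M = {y | (Gdelta D δ).Reachable x y}ᶜ := by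
  obtain ⟨z, hz⟩ := (Set.ne_univ_iff_exists_notMem M).1 hM.2.1
  obtain ⟨x, hx⟩ : ∃ x, M ⊆ {y | (Gdelta D δ).Reachable x y}ᶜ := by
    rcases subset_reachable_or_subset_compl hM.1 hz with h | h
    · obtain ⟨y, hzy⟩ := exists_not_reachable_of_not_connected hnc z
      exact ⟨y, fun a ha hya => hzy ((h ha).trans hya.symm)⟩
    · exact ⟨z, h⟩
  exact ⟨x, hM.2.2 _ (isMmodule_compl_reachable x) (compl_reachable_ne_univ _ x) hx⟩

end Dissim

lemma isPartition_setOf_isCompOf {V : Type*} (G : SimpleGraph V) :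
    IsPartition {C | IsCompOf G C} := by
  refine ⟨?_, ?_, ?_⟩
  · rintro _ ⟨x, rfl⟩
    exact ⟨x, Reachable.refl x⟩
  · rintro _ ⟨x, rfl⟩ _ ⟨y, rfl⟩ hne
    refine Set.disjoint_left.2 fun t hxt hyt => hne ?_
    ext a
    exact ⟨fun h => hyt.trans (hxt.symm.trans h), fun h => hxt.trans (hyt.symm.trans h)⟩
  · exact Set.eq_univ_of_forall fun a => ⟨_, ⟨a, rfl⟩, Reachable.refl a⟩

theorem stmt6_general (D : Dissim X)
    (δ : ℝ)
    (hnc : ¬ (Gdelta D δ).Connected) :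
    MMax D = {M : Set X | ∃ C : Set X, IsCompOf (Gdelta D δ) C ∧ M = Cᶜ} ∧
    IsCopartition (MMax D) := by
  have hset : MMax D = Compl.compl '' {C | IsCompOf (Gdelta D δ) C} := by
    ext M
    constructor
    · intro hM
      obtain ⟨x, rfl⟩ := Dissim.exists_eq_compl_reachable_of_mem_mmax hnc hM
      exact ⟨_, ⟨x, rfl⟩, rfl⟩
    · rintro ⟨_, ⟨x, rfl⟩, rfl⟩
      exact Dissim.compl_reachable_mem_mmax hnc x
  refine ⟨hset.trans ?_, ?_⟩
  · ext M
    exact ⟨fun ⟨C, hC, hM⟩ => ⟨C, hC, hM.symm⟩, fun ⟨C, hC, hM⟩ => ⟨C, hC, hM.symm⟩⟩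
  · rw [IsCopartition, hset, Set.compl_compl_image]
    exact isPartition_setOf_isCompOf _

/-- if G_δ is disconnected for some δ > 0, then the maximal mmodules
are exactly the complements of the connected components of G_δ; in particular
M_max is a copartition of X. -/
theorem stmt6 [Fintype X] [Nonempty X] (D : Dissim X)
    (δ : ℝ) (hδ : 0 < δ)
    (hnc : ¬ (Gdelta D δ).Connected) :
    MMax D = {M : Set X | ∃ C : Set X, IsCompOf (Gdelta D δ) C ∧ M = Cᶜ} ∧
    IsCopartition (MMax D) :=
  stmt6_general D δ hnc
end

section
/- Let (X,d) be a non-connected Robinson space with d(x,y) > 0 for all distinct x,y ∈ X, and let S_0 be a connected component of G_{δ*} with diam(S_0) > δ* (a large δ*-mmodule). Then: (i) there is a bipartition S_0 = S_* ∪ S^* of S_0 into two blocks of (X,d), and this bipartition is unique up to swapping S_* and S^*; (ii) diam(S_*) ≤ δ* and diam(S^*) ≤ δ*; (iii) d(x,y) ≥ δ* for all x ∈ S_* and y ∈ S^*; (iv) if there exists δ > 0 such that the graph G_δ restricted to S_0 is not connected, then δ > δ* and the connected components of G_δ restricted to S_0 are exactly S_* and S^*. -/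
variable {X : Type*}

open Function

namespace SimpleGraph

variable {V : Type*} {G : SimpleGraph V} {S : Set V} {x y : V}

theorem Reachable.preserves {P : V → Prop} (hP : ∀ u v, G.Adj u v → P u → P v)
    (h : G.Reachable x y) (hx : P x) : P y := by
  rw [reachable_iff_reflTransGen] at h
  induction h with
  | refl => exact hx
  | tail _ huv ih => exact hP _ _ huv ih

theorem restrictTo_le : G.restrictTo S ≤ G := fun _ _ h => h.2.2

end SimpleGraph

section ConnectedWithin

open SimpleGraph

variable {V : Type*} {G : SimpleGraph V} {S : Set V} {x y c : V}

theorem ConnectedWithin.preserves (hS : ConnectedWithin G S) {P : V → Prop}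
    (hP : ∀ u ∈ S, ∀ v ∈ S, G.Adj u v → P u → P v) (hx : x ∈ S) (hy : y ∈ S)
    (hPx : P x) : P y :=
  (hS.2 x hx y hy).preserves
    (fun _ _ (h : (G.restrictTo S).Adj _ _) => hP _ h.1 _ h.2.1 h.2.2) hPx

theorem ConnectedWithin.iff_of_adj (hS : ConnectedWithin G S) {P : V → Prop}
    (hP : ∀ u ∈ S, ∀ v ∈ S, G.Adj u v → (P u ↔ P v)) (hx : x ∈ S) (hy : y ∈ S) :
    P x ↔ P y :=
  ⟨hS.preserves (fun u hu v hv huv => (hP u hu v hv huv).1) hx hy,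
    hS.preserves (fun u hu v hv huv => (hP v hv u hu huv.symm).2) hy hx⟩

theorem connectedWithin_of_forall_reachable (hc : c ∈ S)
    (h : ∀ x ∈ S, (G.restrictTo S).Reachable x c) : ConnectedWithin G S :=
  ⟨⟨c, hc⟩, fun x hx y hy => (h x hx).trans (h y hy).symm⟩

theorem IsCompOf.connectedWithin (hS : IsCompOf G S) : ConnectedWithin G S := by
  obtain ⟨x₀, rfl⟩ := hS
  have hreach (y : V) (hy : G.Reachable x₀ y) :
      (G.restrictTo {y | G.Reachable x₀ y}).Reachable x₀ y :=
    hy.preserves (fun u v huv hu =>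
      have hu' : G.Reachable x₀ u := hu.mono restrictTo_le
      hu.trans (Adj.reachable ⟨hu', hu'.trans huv.reachable, huv⟩)) .rfl
  exact connectedWithin_of_forall_reachable (Reachable.refl x₀) fun y hy => (hreach y hy).symm

theorem IsCompOf.exists_notMem (hS : IsCompOf G S) (hG : ¬G.Connected) : ∃ z, z ∉ S := by
  obtain ⟨x₀, rfl⟩ := hS
  have : Nonempty V := ⟨x₀⟩
  by_contra! h
  exact hG ⟨fun u v => (h u).symm.trans (h v)⟩

end ConnectedWithin

theorem Set.eq_and_eq_of_subset_of_subset {α : Type*} {A B A' B' : Set α} (hA' : A' ⊆ A)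
    (hB' : B' ⊆ B) (hAB : Disjoint A B) (hU : A' ∪ B' = A ∪ B) : A' = A ∧ B' = B := by
  refine ⟨hA'.antisymm fun x hx => ?_, hB'.antisymm fun x hx => ?_⟩
  · exact (hU.symm ▸ mem_union_left B hx : x ∈ A' ∪ B').resolve_right
      fun h => disjoint_left.1 hAB hx (hB' h)
  · exact (hU.symm ▸ mem_union_right A hx : x ∈ A' ∪ B').resolve_left
      fun h => disjoint_left.1 hAB (hA' h) hx

theorem Set.eq_or_eq_swap_of_subset_or_subset {α : Type*} {A B A' B' : Set α}
    (hA : A.Nonempty) (hB : B.Nonempty) (hAB : Disjoint A B) (hU : A' ∪ B' = A ∪ B)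
    (hA' : A' ⊆ A ∨ A' ⊆ B) (hB' : B' ⊆ A ∨ B' ⊆ B) :
    (A' = A ∧ B' = B) ∨ (A' = B ∧ B' = A) := by
  rcases hA' with hA' | hA' <;> rcases hB' with hB' | hB'
  · obtain ⟨b, hb⟩ := hB
    exact absurd (union_subset hA' hB' (hU.symm ▸ mem_union_right A hb))
      (disjoint_right.1 hAB hb)
  · exact .inl (eq_and_eq_of_subset_of_subset hA' hB' hAB hU)
  · exact .inr (eq_and_eq_of_subset_of_subset hA' hB' hAB.symm (hU.trans (union_comm A B)))
  · obtain ⟨a, ha⟩ := hA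
    exact absurd (union_subset hA' hB' (hU.symm ▸ mem_union_left B ha))
      (disjoint_left.1 hAB ha)

section Dissim

variable {D : Dissim X} {δ c : ℝ} {S T Y : Set X} {lt : X → X → Prop} {x y z : X}

theorem diam_le (hc : 0 ≤ c) (h : ∀ x ∈ Y, ∀ y ∈ Y, D.d x y ≤ c) : diam D Y ≤ c :=
  Real.sSup_le (by rintro _ ⟨x, hx, y, hy, rfl⟩; exact h x hx y hy) hc

theorem exists_dist_gt_of_lt_diam (hc : 0 ≤ c) (h : c < diam D Y) :
    ∃ x ∈ Y, ∃ y ∈ Y, c < D.d x y := by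
  by_contra! hle
  exact (diam_le hc hle).not_gt h

theorem IsCompOf.dist_eq (hS : IsCompOf (Gdelta D δ) S) (hx : x ∈ S) (hz : z ∉ S) :
    D.d x z = δ := by
  obtain ⟨x₀, rfl⟩ := hS
  by_contra hne
  exact hz (hx.trans (SimpleGraph.Adj.reachable ⟨fun h => hz (h ▸ hx), hne⟩))

theorem IsCompOf.nonneg (hS : IsCompOf (Gdelta D δ) S) (hx : x ∈ S) (hz : z ∉ S) : 0 ≤ δ :=
  hS.dist_eq hx hz ▸ D.nonneg x z

theorem reachable_restrictTo_Gdelta (hx : x ∈ S) (hy : y ∈ S) (h : D.d x y ≠ δ) :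
    ((Gdelta D δ).restrictTo S).Reachable x y := by
  by_cases hxy : x = y
  · exact hxy ▸ .rfl
  · exact SimpleGraph.Adj.reachable ⟨hx, hy, hxy, h⟩

theorem IsInterval.of_swap (h : IsInterval (swap lt) T) : IsInterval lt T :=
  fun a b c hab hbc ha hc => h c b a hbc hab hc ha

theorem IsCompatOrder.swap (h : IsCompatOrder D lt) : IsCompatOrder D (swap lt) := by
  have := h.1
  refine ⟨inferInstance, fun x y z hxy hyz => ?_⟩
  have := h.2 z y x hyz hxy
  rw [D.symm x y, D.symm x z, D.symm y z]
  exact this.symm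

/-- `lowerPart (swap lt) S` is the set of points of `S` above every point outside `S`. -/
def lowerPart (lt : X → X → Prop) (S : Set X) : Set X :=
  {x ∈ S | ∀ z ∉ S, lt x z}

theorem isInterval_lowerPart [IsStrictOrder X lt] : IsInterval lt (lowerPart lt S) := by
  rintro a b c - hbc - ⟨-, hc⟩
  have hbS : b ∈ S := by
    by_contra hb
    exact asymm hbc (hc b hb)
  exact ⟨hbS, fun z hz => _root_.trans hbc (hc z hz)⟩

theorem subset_lowerPart_or_subset_lowerPart_swap
    (hU : lowerPart lt S ∪ lowerPart (swap lt) S = S) (hz : z ∉ S) (hT : T ⊆ S)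
    (hI : IsInterval lt T) : T ⊆ lowerPart lt S ∨ T ⊆ lowerPart (swap lt) S := by
  by_contra h
  simp only [not_or, Set.not_subset] at h
  obtain ⟨⟨p, hpT, hp⟩, ⟨q, hqT, hq⟩⟩ := h
  have hTU : T ⊆ lowerPart lt S ∪ lowerPart (swap lt) S := hU.symm ▸ hT
  have hpU : p ∈ lowerPart (swap lt) S := (hTU hpT).resolve_left hp
  have hqL : q ∈ lowerPart lt S := (hTU hqT).resolve_right hq
  exact hz (hT (hI q z p (hqL.2 z hz) (hpU.2 z hz) hqT hpT))

end Dissim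

section CompatOrder

variable {D : Dissim X} {δ : ℝ} {S : Set X} {lt : X → X → Prop} {a b u v x y z z₁ z₂ : X}

namespace IsCompatOrder

theorem lt_of_dist_gt (hlt : IsCompatOrder D lt) (hS : IsCompOf (Gdelta D δ) S) (ha : a ∈ S)
    (hb : b ∈ S) (hab : δ < D.d a b) (h : lt a b) (hz : z ∉ S) : lt a z := by
  have := hlt.1
  rcases trichotomous_of lt a z with haz | rfl | hza
  · exact haz
  · exact absurd ha hz
  · have hle := (hlt.2 z a b hza h).2
    have hzb : D.d z b = δ := D.symm z b ▸ hS.dist_eq hb hz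
    linarith

theorem lt_of_dist_lt (hlt : IsCompatOrder D lt) (hS : IsCompOf (Gdelta D δ) S) (hu : u ∈ S)
    (hv : v ∈ S) (huv : D.d u v < δ) (hz : z ∉ S) (h : lt z u) : lt z v := by
  have := hlt.1
  rcases trichotomous_of lt z v with hzv | rfl | hvz
  · exact hzv
  · exact absurd hv hz
  · have hle := (hlt.2 v z u hvz h).2
    have hzu : D.d z u = δ := D.symm z u ▸ hS.dist_eq hu hz
    linarith [D.symm v u]

theorem not_between_of_dist_gt (hlt : IsCompatOrder D lt) (hS : IsCompOf (Gdelta D δ) S)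
    (hu : u ∈ S) (hv : v ∈ S) (huv : δ < D.d u v) (hz₁ : z₁ ∉ S) (hz₂ : z₂ ∉ S) :
    ¬(lt z₁ u ∧ lt u z₂) := by
  have := hlt.1
  rintro ⟨h₁, h₂⟩
  rcases trichotomous_of lt u v with h | rfl | h
  · exact asymm h₁ (hlt.lt_of_dist_gt hS hu hv huv h hz₁)
  · linarith [D.self u, hS.nonneg hu hz₁]
  · exact asymm h₂ (hlt.swap.lt_of_dist_gt hS hu hv huv h hz₂)

/-- Being strictly between two outside points spreads along the edges of `G_δ` inside `S`,
but never reaches an endpoint of a pair at distance `> δ`. -/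
theorem mem_lowerPart_or (hlt : IsCompatOrder D lt) (hS : IsCompOf (Gdelta D δ) S) (ha : a ∈ S)
    (hb : b ∈ S) (hab : δ < D.d a b) (hx : x ∈ S) :
    x ∈ lowerPart lt S ∨ x ∈ lowerPart (Function.swap lt) S := by
  have := hlt.1
  by_contra h
  simp only [lowerPart, Set.mem_ofPred_eq, hx, true_and, not_or, not_forall] at h
  obtain ⟨⟨z₁, hz₁, hxz₁⟩, ⟨z₂, hz₂, hz₂x⟩⟩ := h
  have hne (z : X) (hz : z ∉ S) : x ≠ z := fun h => hz (h ▸ hx)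
  have h₁ : lt z₁ x :=
    ((trichotomous_of lt x z₁).resolve_left hxz₁).resolve_left (hne z₁ hz₁)
  refine hlt.not_between_of_dist_gt hS ha hb hab hz₁ hz₂ (hS.connectedWithin.preserves
    (P := fun y => lt z₁ y ∧ lt y z₂) (fun u hu v hv huv hPu => ?_) hx ha ⟨h₁, ?_⟩)
  · rcases lt_or_gt_of_ne huv.2 with hlt' | hgt
    · exact ⟨hlt.lt_of_dist_lt hS hu hv hlt' hz₁ hPu.1,
        hlt.swap.lt_of_dist_lt hS hu hv hlt' hz₂ hPu.2⟩
    · exact absurd hPu (hlt.not_between_of_dist_gt hS hu hv hgt hz₁ hz₂)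
  · exact ((trichotomous_of lt z₂ x).resolve_left hz₂x).resolve_left (hne z₂ hz₂).symm

theorem lowerPart_nonempty (hlt : IsCompatOrder D lt) (hS : IsCompOf (Gdelta D δ) S)
    (ha : a ∈ S) (hb : b ∈ S) (hab : δ < D.d a b) (hz : z ∉ S) :
    (lowerPart lt S).Nonempty := by
  have := hlt.1
  rcases trichotomous_of lt a b with h | rfl | h
  · exact ⟨a, ha, fun z hz => hlt.lt_of_dist_gt hS ha hb hab h hz⟩
  · linarith [D.self a, hS.nonneg ha hz]
  · exact ⟨b, hb, fun z hz => hlt.lt_of_dist_gt hS hb ha (D.symm a b ▸ hab) h hz⟩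

theorem dist_le_of_mem_lowerPart (hlt : IsCompatOrder D lt) (hS : IsCompOf (Gdelta D δ) S)
    (hz : z ∉ S) (hx : x ∈ lowerPart lt S) (hy : y ∈ lowerPart lt S) : D.d x y ≤ δ := by
  have := hlt.1
  rcases trichotomous_of lt x y with h | rfl | h
  · exact hS.dist_eq hx.1 hz ▸ (hlt.2 x y z h (hy.2 z hz)).1
  · exact D.self x ▸ hS.nonneg hx.1 hz
  · exact D.symm y x ▸ hS.dist_eq hy.1 hz ▸ (hlt.2 y x z h (hx.2 z hz)).1

end IsCompatOrder

end CompatOrder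

structure IsSplitting (D : Dissim X) (δ : ℝ) (S A B : Set X) : Prop where
  nonempty_left : A.Nonempty
  nonempty_right : B.Nonempty
  disjoint : Disjoint A B
  union_eq : A ∪ B = S
  dist_le_left : ∀ x ∈ A, ∀ y ∈ A, D.d x y ≤ δ
  dist_le_right : ∀ x ∈ B, ∀ y ∈ B, D.d x y ≤ δ
  le_dist : ∀ x ∈ A, ∀ y ∈ B, δ ≤ D.d x y

namespace IsSplitting

variable {D : Dissim X} {δ : ℝ} {S A B A' B' : Set X} {u v x : X}

theorem symm (h : IsSplitting D δ S A B) : IsSplitting D δ S B A where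
  nonempty_left := h.nonempty_right
  nonempty_right := h.nonempty_left
  disjoint := h.disjoint.symm
  union_eq := Set.union_comm A B ▸ h.union_eq
  dist_le_left := h.dist_le_right
  dist_le_right := h.dist_le_left
  le_dist x hx y hy := D.symm y x ▸ h.le_dist y hy x hx

theorem subset_left (h : IsSplitting D δ S A B) : A ⊆ S :=
  h.union_eq ▸ Set.subset_union_left

theorem subset_right (h : IsSplitting D δ S A B) : B ⊆ S :=
  h.symm.subset_left

theorem mem_or (h : IsSplitting D δ S A B) (hx : x ∈ S) : x ∈ A ∨ x ∈ B :=
  (Set.mem_union _ _ _).1 (h.union_eq.symm ▸ hx)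

theorem right_eq_diff (h : IsSplitting D δ S A B) : B = S \ A := by
  rw [← h.union_eq, Set.union_sdiff_left, h.disjoint.symm.sdiff_eq_left]

theorem mem_left_iff_of_dist_lt (h : IsSplitting D δ S A B) (hu : u ∈ S) (hv : v ∈ S)
    (huv : D.d u v < δ) : u ∈ A ↔ v ∈ A := by
  have key (u v : X) (hv : v ∈ S) (huv : D.d u v < δ) (hu : u ∈ A) : v ∈ A :=
    (h.mem_or hv).resolve_right fun hvB => (h.le_dist u hu v hvB).not_gt huv
  exact ⟨key u v hv huv, key v u hu (D.symm u v ▸ huv)⟩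

theorem mem_left_iff_of_dist_gt (h : IsSplitting D δ S A B) (hu : u ∈ S) (hv : v ∈ S)
    (huv : δ < D.d u v) : u ∈ A ↔ v ∉ A := by
  refine ⟨fun huA hvA => (h.dist_le_left u huA v hvA).not_gt huv, fun hvA => ?_⟩
  by_contra huA
  exact (h.dist_le_right u ((h.mem_or hu).resolve_left huA) v
    ((h.mem_or hv).resolve_left hvA)).not_gt huv

/-- Pairs at distance `< δ` lie on the same side of a splitting and pairs at distance `> δ` on
opposite sides, so along the edges of `G_δ` the side of one point determines all others. -/
theorem eq_or_eq_swap (hS : ConnectedWithin (Gdelta D δ) S) (h : IsSplitting D δ S A B)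
    (h' : IsSplitting D δ S A' B') : (A' = A ∧ B' = B) ∨ (A' = B ∧ B' = A) := by
  obtain ⟨x, hx⟩ := hS.1
  have hsame : ∀ y ∈ S, ((x ∈ A ↔ x ∈ A') ↔ (y ∈ A ↔ y ∈ A')) := fun y hy =>
    hS.iff_of_adj (P := fun y => y ∈ A ↔ y ∈ A') (fun u hu v hv huv => by
      rcases lt_or_gt_of_ne huv.2 with hlt | hgt
      · rw [h.mem_left_iff_of_dist_lt hu hv hlt, h'.mem_left_iff_of_dist_lt hu hv hlt]
      · rw [h.mem_left_iff_of_dist_gt hu hv hgt, h'.mem_left_iff_of_dist_gt hu hv hgt,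
          not_iff_not]) hx hy
  have hA := h.subset_left
  have hA' := h'.subset_left
  by_cases hx' : x ∈ A ↔ x ∈ A'
  · have hA'A : A' = A := by
      ext y
      have := hsame y
      have := @hA y
      have := @hA' y
      tauto
    exact .inl ⟨hA'A, by rw [h'.right_eq_diff, hA'A, ← h.right_eq_diff]⟩
  · have hA'B : A' = B := by
      rw [h.right_eq_diff]
      ext y
      have := hsame y
      have := @hA' y
      simp only [Set.mem_sdiff]
      tauto
    exact .inr ⟨hA'B, by rw [h'.right_eq_diff, hA'B, ← h.symm.right_eq_diff]⟩

end IsSplitting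

section Splitting

variable {D : Dissim X} {δ ε : ℝ} {S A B C : Set X} {lt : X → X → Prop} {a b p q x z : X}

theorem IsCompatOrder.isSplitting (hlt : IsCompatOrder D lt) (hS : IsCompOf (Gdelta D δ) S)
    (ha : a ∈ S) (hb : b ∈ S) (hab : δ < D.d a b) (hz : z ∉ S) :
    IsSplitting D δ S (lowerPart lt S) (lowerPart (Function.swap lt) S) := by
  have := hlt.1
  exact {
    nonempty_left := hlt.lowerPart_nonempty hS ha hb hab hz
    nonempty_right := hlt.swap.lowerPart_nonempty hS ha hb hab hz
    disjoint := Set.disjoint_left.2 fun x hx hx' => asymm (hx.2 z hz) (hx'.2 z hz)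
    union_eq := (Set.union_subset (Set.sep_subset _ _) (Set.sep_subset _ _)).antisymm
      fun x hx => hlt.mem_lowerPart_or hS ha hb hab hx
    dist_le_left := fun x hx y hy => hlt.dist_le_of_mem_lowerPart hS hz hx hy
    dist_le_right := fun x hx y hy => hlt.swap.dist_le_of_mem_lowerPart hS hz hx hy
    le_dist := fun x hx y hy => hS.dist_eq hx.1 hz ▸ (hlt.2 x z y (hx.2 z hz) (hy.2 z hz)).1 }

namespace IsSplitting

theorem isBlock_left (h : IsSplitting D δ S A B) (hS : IsCompOf (Gdelta D δ) S) (ha : a ∈ S)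
    (hb : b ∈ S) (hab : δ < D.d a b) (hz : z ∉ S) : IsBlock D A := by
  intro lt hlt
  have := hlt.1
  rcases (hlt.isSplitting hS ha hb hab hz).eq_or_eq_swap hS.connectedWithin h with
    ⟨rfl, -⟩ | ⟨rfl, -⟩
  · exact isInterval_lowerPart
  · exact (isInterval_lowerPart (lt := swap lt)).of_swap

theorem connectedWithin_of_lt (h : IsSplitting D ε S A B) (hδ : δ < ε) :
    ConnectedWithin (Gdelta D δ) S := by
  obtain ⟨p, hp⟩ := h.nonempty_left
  obtain ⟨q, hq⟩ := h.nonempty_right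
  have hcross (x) (hx : x ∈ A) (y) (hy : y ∈ B) : ((Gdelta D δ).restrictTo S).Reachable x y :=
    reachable_restrictTo_Gdelta (h.subset_left hx) (h.subset_right hy)
      (hδ.trans_le (h.le_dist x hx y hy)).ne'
  refine connectedWithin_of_forall_reachable (h.subset_right hq) fun x hx => ?_
  rcases h.mem_or hx with hx | hx
  · exact hcross x hx q hq
  · exact (hcross p hp x hx).symm.trans (hcross p hp q hq)

theorem connectedWithin_of_dist_ne (h : IsSplitting D ε S A B) (hε : ε < δ) (hp : p ∈ A)
    (hq : q ∈ B) (hpq : D.d p q ≠ δ) : ConnectedWithin (Gdelta D δ) S := by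
  have hA (x) (hx : x ∈ A) : ((Gdelta D δ).restrictTo S).Reachable x p :=
    reachable_restrictTo_Gdelta (h.subset_left hx) (h.subset_left hp)
      ((h.dist_le_left x hx p hp).trans_lt hε).ne
  have hB (x) (hx : x ∈ B) : ((Gdelta D δ).restrictTo S).Reachable x q :=
    reachable_restrictTo_Gdelta (h.subset_right hx) (h.subset_right hq)
      ((h.dist_le_right x hx q hq).trans_lt hε).ne
  refine connectedWithin_of_forall_reachable (h.subset_right hq) fun x hx => ?_
  rcases h.mem_or hx with hx | hx
  · exact (hA x hx).trans
      (reachable_restrictTo_Gdelta (h.subset_left hp) (h.subset_right hq) hpq)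
  · exact hB x hx

theorem setOf_reachable_eq_left (h : IsSplitting D ε S A B) (hε : ε < δ)
    (hcross : ∀ p ∈ A, ∀ q ∈ B, D.d p q = δ) (hx : x ∈ A) :
    {y | ((Gdelta D δ).restrictTo S).Reachable x y} = A := by
  ext y
  refine ⟨fun hy => hy.preserves (fun u v huv hu => ?_) hx, fun hy =>
    reachable_restrictTo_Gdelta (h.subset_left hx) (h.subset_left hy)
      ((h.dist_le_left x hx y hy).trans_lt hε).ne⟩
  obtain ⟨-, hv, -, huv⟩ := huv
  exact (h.mem_or hv).resolve_right fun hvB => huv (hcross u hu v hvB)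

theorem isCompWithin_iff (h : IsSplitting D ε S A B) (hε : ε < δ)
    (hcross : ∀ p ∈ A, ∀ q ∈ B, D.d p q = δ) :
    IsCompWithin (Gdelta D δ) S C ↔ C = A ∨ C = B := by
  have hcross' : ∀ p ∈ B, ∀ q ∈ A, D.d p q = δ := fun p hp q hq =>
    D.symm p q ▸ hcross q hq p hp
  constructor
  · rintro ⟨x, hx, rfl⟩
    rcases h.mem_or hx with hx | hx
    · exact .inl (h.setOf_reachable_eq_left hε hcross hx)
    · exact .inr (h.symm.setOf_reachable_eq_left hε hcross' hx)
  · rintro (rfl | rfl)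
    · obtain ⟨x, hx⟩ := h.nonempty_left
      exact ⟨x, h.subset_left hx, (h.setOf_reachable_eq_left hε hcross hx).symm⟩
    · obtain ⟨x, hx⟩ := h.nonempty_right
      exact ⟨x, h.subset_right hx, (h.symm.setOf_reachable_eq_left hε hcross' hx).symm⟩

theorem lt_and_isCompWithin_iff (h : IsSplitting D ε S A B) (hS : ConnectedWithin (Gdelta D ε) S)
    (hδ : ¬ConnectedWithin (Gdelta D δ) S) :
    ε < δ ∧ ∀ C, IsCompWithin (Gdelta D δ) S C ↔ C = A ∨ C = B := by
  have hεδ : ε < δ := by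
    rcases lt_trichotomy δ ε with hlt | rfl | hgt
    · exact absurd (h.connectedWithin_of_lt hlt) hδ
    · exact absurd hS hδ
    · exact hgt
  refine ⟨hεδ, fun C => h.isCompWithin_iff hεδ fun p hp q hq => ?_⟩
  by_contra hpq
  exact hδ (h.connectedWithin_of_dist_ne hεδ hp hq hpq)

end IsSplitting

end Splitting

theorem stmt9_general (D : Dissim X)
    (hRob : Robinson D)
    (δstar : ℝ)
    (hnc : ¬ (Gdelta D δstar).Connected)
    (S₀ : Set X) (hS₀ : IsCompOf (Gdelta D δstar) S₀)
    (hlarge : δstar < diam D S₀) :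
    ∃ Sb St : Set X,
      (Sb.Nonempty ∧ St.Nonempty ∧ Disjoint Sb St ∧ Sb ∪ St = S₀ ∧
        IsBlock D Sb ∧ IsBlock D St) ∧
      (∀ Sb' St' : Set X,
        (Sb'.Nonempty ∧ St'.Nonempty ∧ Disjoint Sb' St' ∧ Sb' ∪ St' = S₀ ∧
          IsBlock D Sb' ∧ IsBlock D St') →
        (Sb' = Sb ∧ St' = St) ∨ (Sb' = St ∧ St' = Sb)) ∧
      diam D Sb ≤ δstar ∧ diam D St ≤ δstar ∧
      (∀ x ∈ Sb, ∀ y ∈ St, δstar ≤ D.d x y) ∧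
      (∀ δ : ℝ, 0 < δ → ¬ ConnectedWithin (Gdelta D δ) S₀ →
        δstar < δ ∧
        ∀ C : Set X, IsCompWithin (Gdelta D δ) S₀ C ↔ (C = Sb ∨ C = St)) := by
  obtain ⟨z, hz⟩ := hS₀.exists_notMem hnc
  obtain ⟨x, hx⟩ := hS₀.connectedWithin.1
  have hδ : 0 ≤ δstar := hS₀.nonneg hx hz
  obtain ⟨a, ha, b, hb, hab⟩ := exists_dist_gt_of_lt_diam hδ hlarge
  obtain ⟨lt, hlt⟩ := hRob
  have h := hlt.isSplitting hS₀ ha hb hab hz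
  refine ⟨_, _, ⟨h.nonempty_left, h.nonempty_right, h.disjoint, h.union_eq,
    h.isBlock_left hS₀ ha hb hab hz, h.symm.isBlock_left hS₀ ha hb hab hz⟩, ?_,
    diam_le hδ h.dist_le_left, diam_le hδ h.dist_le_right, h.le_dist,
    fun δ _ hδ => h.lt_and_isCompWithin_iff hS₀.connectedWithin hδ⟩
  rintro Sb' St' ⟨-, -, -, hU, hSb', hSt'⟩
  have hside (T : Set X) (hT : T ⊆ S₀) (hI : IsBlock D T) :=
    subset_lowerPart_or_subset_lowerPart_swap h.union_eq hz hT (hI lt hlt)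
  exact Set.eq_or_eq_swap_of_subset_or_subset h.nonempty_left h.nonempty_right h.disjoint
    (hU.trans h.union_eq.symm) (hside Sb' (hU ▸ Set.subset_union_left) hSb')
    (hside St' (hU ▸ Set.subset_union_right) hSt')

/-- properties of a large δ*-mmodule S₀ of a non-connected Robinson
space: unique bipartition into two blocks, both of diameter at most δ*, with
distances at least δ* across, and the components of any disconnecting G_δ
restricted to S₀ are exactly the two parts (and such δ exceeds δ*). -/
theorem stmt9 [Fintype X] [Nonempty X] (D : Dissim X)
    (hpos : ∀ x y : X, x ≠ y → 0 < D.d x y)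
    (hRob : Robinson D)
    (δstar : ℝ)
    (hls : IsLeast {δ : ℝ | 0 < δ ∧ (Gle D δ).Connected} δstar)
    (hnc : ¬ (Gdelta D δstar).Connected)
    (S₀ : Set X) (hS₀ : IsCompOf (Gdelta D δstar) S₀)
    (hlarge : δstar < diam D S₀) :
    ∃ Sb St : Set X,
      (Sb.Nonempty ∧ St.Nonempty ∧ Disjoint Sb St ∧ Sb ∪ St = S₀ ∧
        IsBlock D Sb ∧ IsBlock D St) ∧
      (∀ Sb' St' : Set X,
        (Sb'.Nonempty ∧ St'.Nonempty ∧ Disjoint Sb' St' ∧ Sb' ∪ St' = S₀ ∧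
          IsBlock D Sb' ∧ IsBlock D St') →
        (Sb' = Sb ∧ St' = St) ∨ (Sb' = St ∧ St' = Sb)) ∧
      diam D Sb ≤ δstar ∧ diam D St ≤ δstar ∧
      (∀ x ∈ Sb, ∀ y ∈ St, δstar ≤ D.d x y) ∧
      (∀ δ : ℝ, 0 < δ → ¬ ConnectedWithin (Gdelta D δ) S₀ →
        δstar < δ ∧
        ∀ C : Set X, IsCompWithin (Gdelta D δ) S₀ C ↔ (C = Sb ∨ C = St)) :=
  stmt9_general D hRob δstar hnc S₀ hS₀ hlarge
end

section
/- Let (X,d) be a non-connected Robinson space with d(x,y) > 0 for all distinct x,y ∈ X. Then every connected component S of G_{δ*} with diam(S) ≤ δ* is also a connected component of the graph G_{<δ*}. -/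
variable {X : Type*}

theorem SimpleGraph.reachable_iff_of_le_of_adj {V : Type*} {G H : SimpleGraph V} (hGH : G ≤ H)
    {x : V} (hadj : ∀ u v, H.Reachable x u → H.Adj u v → G.Adj u v) (y : V) :
    G.Reachable x y ↔ H.Reachable x y := by
  refine ⟨fun h => h.mono hGH, fun h => ?_⟩
  rw [SimpleGraph.reachable_iff_reflTransGen] at h
  induction h with
  | refl => rfl
  | tail hxu huv ih =>
    have hHxu : H.Reachable x _ := (SimpleGraph.reachable_iff_reflTransGen _ _).2 hxu
    exact ih.trans (hadj _ _ hHxu huv).reachable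

theorem Dissim.d_le_diam (D : Dissim X) {Y : Set X} (hY : Y.Finite) {x y : X}
    (hx : x ∈ Y) (hy : y ∈ Y) :
    D.d x y ≤ diam D Y :=
  le_csSup (hY.image2 D.d hY).bddAbove (Set.mem_image2_of_mem hx hy)

theorem Glt_le_Gdelta (D : Dissim X) (δ : ℝ) : Glt D δ ≤ Gdelta D δ :=
  fun _ _ ⟨hne, hlt⟩ => ⟨hne, hlt.ne⟩

theorem stmt13_general [Fintype X] (D : Dissim X)
    (δstar : ℝ)
    (S : Set X) (hS : IsCompOf (Gdelta D δstar) S)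
    (hdiam : diam D S ≤ δstar) :
    IsCompOf (Glt D δstar) S := by
  obtain ⟨x, rfl⟩ := hS
  refine ⟨x, Set.ext fun y =>
    (SimpleGraph.reachable_iff_of_le_of_adj (Glt_le_Gdelta D δstar) ?_ y).symm⟩
  rintro u v hu ⟨hne, hd⟩
  have hv : (Gdelta D δstar).Reachable x v := hu.trans (SimpleGraph.Adj.reachable ⟨hne, hd⟩)
  exact ⟨hne, ((D.d_le_diam (Set.toFinite _) hu hv).trans hdiam).lt_of_ne hd⟩

/-- in a non-connected Robinson space, every δ*-mmodule (component of
G_{δ*}) of diameter at most δ* is also a connected component of G_{<δ*}. -/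
theorem stmt13 [Fintype X] [Nonempty X] (D : Dissim X)
    (hpos : ∀ x y : X, x ≠ y → 0 < D.d x y)
    (hRob : Robinson D)
    (δstar : ℝ)
    (hls : IsLeast {δ : ℝ | 0 < δ ∧ (Gle D δ).Connected} δstar)
    (hnc : ¬ (Gdelta D δstar).Connected)
    (S : Set X) (hS : IsCompOf (Gdelta D δstar) S)
    (hdiam : diam D S ≤ δstar) :
    IsCompOf (Glt D δstar) S :=
  stmt13_general D δstar S hS hdiam
end
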